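/- Let A ∈ ℝ^{n×d} and Z ∈ ℝ^{d×m} have orthonormal columns, satisfying ‖A − AZZᵀ‖₂² ≤ (ε/k)‖A − A_k‖_F². Then for every rank-k orthogonal projection P, ‖A − PA‖_F² ≤ ‖AZZᵀ − P·AZZᵀ‖_F² + c ≤ (1+ε)‖A − PA‖_F², where c = ‖A − AZZᵀ‖_F². -/

import Mathlib

open Matrix
open scoped Matrix.Norms.L2Operator

/-- Squared Frobenius norm of a real matrix: `‖M‖_F² = tr(M Mᵀ)`. -/
noncomputable def frobSq {n d : ℕ} (M : Matrix (Fin n) (Fin d) ℝ) : ℝ :=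
  Matrix.trace (M * Mᵀ)

/-- `‖A − A_k‖_F²`: the optimal squared-Frobenius-error of a rank-`k`
approximation of `A` (Eckart–Young). -/
noncomputable def optErr {n d : ℕ} (A : Matrix (Fin n) (Fin d) ℝ) (k : ℕ) : ℝ :=
  sInf {x : ℝ | ∃ B : Matrix (Fin n) (Fin d) ℝ, B.rank ≤ k ∧ x = frobSq (A - B)}

/-- Spectral (operator) norm of a real matrix. -/
noncomputable def specNorm {n d : ℕ} (M : Matrix (Fin n) (Fin d) ℝ) : ℝ :=
  ‖LinearMap.toContinuousLinearMap (Matrix.toEuclideanLin M)‖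

lemma specNorm_eq {n d : ℕ} (M : Matrix (Fin n) (Fin d) ℝ) : specNorm M = ‖M‖ := rfl

lemma specNorm_transpose {n d : ℕ} (M : Matrix (Fin n) (Fin d) ℝ) :
    specNorm Mᵀ = specNorm M := by
  have h : Mᵀ = Mᴴ := by ext i j; simp [Matrix.conjTranspose_apply]
  rw [specNorm_eq, specNorm_eq, h, Matrix.l2_opNorm_conjTranspose]

lemma euc_norm_sq {ι : Type*} [Fintype ι] (y : EuclideanSpace ℝ ι) :
    ‖y‖ ^ 2 = ∑ i, y i ^ 2 := by
  rw [EuclideanSpace.norm_eq, Real.sq_sqrt (by positivity)]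
  simp [sq_abs]

lemma mulVec_sq_le {n d : ℕ} (M : Matrix (Fin n) (Fin d) ℝ) (v : Fin d → ℝ) :
    ∑ i, (M *ᵥ v) i ^ 2 ≤ specNorm M ^ 2 * ∑ j, v j ^ 2 := by
  have h := Matrix.l2_opNorm_mulVec M ((WithLp.equiv 2 (Fin d → ℝ)).symm v)
  have h2 : ‖(EuclideanSpace.equiv (Fin n) ℝ).symm (M *ᵥ v)‖ ^ 2 ≤
      (‖M‖ * ‖(WithLp.equiv 2 (Fin d → ℝ)).symm v‖) ^ 2 := by
    apply pow_le_pow_left₀ (norm_nonneg _) _ 2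
    exact h
  rw [mul_pow, euc_norm_sq, euc_norm_sq] at h2
  simpa [specNorm_eq] using h2

lemma frobSq_eq_sum {n d : ℕ} (M : Matrix (Fin n) (Fin d) ℝ) :
    frobSq M = ∑ i, ∑ j, M i j ^ 2 := by
  simp [frobSq, Matrix.trace, Matrix.mul_apply, Matrix.diag, sq]

lemma frobSq_nonneg {n d : ℕ} (M : Matrix (Fin n) (Fin d) ℝ) : 0 ≤ frobSq M := by
  rw [frobSq_eq_sum]; positivity

lemma frobSq_add_of_orth {n d : ℕ} (X Y : Matrix (Fin n) (Fin d) ℝ) (h : X * Yᵀ = 0) :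
    frobSq (X + Y) = frobSq X + frobSq Y := by
  have h' : Y * Xᵀ = 0 := by
    have := congrArg Matrix.transpose h
    rwa [Matrix.transpose_mul, Matrix.transpose_transpose, Matrix.transpose_zero] at this
  unfold frobSq
  rw [Matrix.transpose_add, Matrix.add_mul, Matrix.mul_add, Matrix.mul_add, h, h']
  simp

lemma frobSq_sub_proj {n d : ℕ} (P : Matrix (Fin n) (Fin n) ℝ) (hPsymm : Pᵀ = P)
    (hPidem : P * P = P) (X : Matrix (Fin n) (Fin d) ℝ) :
    frobSq (X - P * X) = frobSq X - frobSq (P * X) := by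
  have key : Matrix.trace (P * X * (Xᵀ * P)) = Matrix.trace (P * X * Xᵀ) := by
    rw [← Matrix.mul_assoc, Matrix.trace_mul_comm, ← Matrix.mul_assoc, ← Matrix.mul_assoc,
      hPidem]
  have e2 : Matrix.trace (X * (Xᵀ * P)) = Matrix.trace (P * X * Xᵀ) := by
    rw [← Matrix.mul_assoc, Matrix.trace_mul_comm, ← Matrix.mul_assoc]
  unfold frobSq
  rw [Matrix.transpose_sub, Matrix.transpose_mul, hPsymm]
  rw [Matrix.sub_mul, Matrix.mul_sub, Matrix.mul_sub]
  rw [Matrix.trace_sub, Matrix.trace_sub, Matrix.trace_sub]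
  rw [e2, key]
  ring

lemma exists_factor {n k : ℕ} (P : Matrix (Fin n) (Fin n) ℝ) (hPsymm : Pᵀ = P)
    (hPidem : P * P = P) (hPrank : P.rank = k) :
    ∃ Q : Matrix (Fin n) (Fin k) ℝ, Qᵀ * Q = 1 ∧ Q * Qᵀ = P := by
  classical
  set V : Submodule ℝ (EuclideanSpace ℝ (Fin n)) :=
    LinearMap.range (Matrix.toEuclideanLin P) with hV
  have hfin : Module.finrank ℝ V = k := by
    rw [← hPrank, Matrix.rank_eq_finrank_range_toLin P (PiLp.basisFun 2 ℝ (Fin n))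
      (PiLp.basisFun 2 ℝ (Fin n))]
    rfl
  let b : OrthonormalBasis (Fin k) ℝ V :=
    (stdOrthonormalBasis ℝ V).reindex (finCongr hfin)
  let g : Fin k → (Fin n → ℝ) := fun l => (b l : EuclideanSpace ℝ (Fin n))
  have hg_inner : ∀ i j : Fin k, g i ⬝ᵥ g j = if i = j then 1 else 0 := by
    intro i j
    have horth := b.orthonormal
    rw [orthonormal_iff_ite] at horth
    have h := horth i j
    rw [Submodule.coe_inner, real_inner_comm] at h
    simpa [PiLp.inner_apply, dotProduct, g] using h
  have hgV : ∀ l : Fin k, ∃ u : Fin n → ℝ, P *ᵥ u = g l := by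
    intro l
    obtain ⟨u, hu⟩ := (b l).2
    refine ⟨WithLp.equiv 2 (Fin n → ℝ) u, ?_⟩
    have : WithLp.equiv 2 (Fin n → ℝ) (Matrix.toEuclideanLin P u) =
        P *ᵥ WithLp.equiv 2 (Fin n → ℝ) u := by
      rfl
    rw [← this, hu]
    rfl
  have hfix : ∀ (l : Fin k) (v : Fin n → ℝ), g l ⬝ᵥ (P *ᵥ v) = g l ⬝ᵥ v := by
    intro l v
    obtain ⟨u, hu⟩ := hgV l
    have hP : g l ᵥ* P = g l := by
      rw [← hu, ← Matrix.vecMul_transpose, Matrix.vecMul_vecMul, hPsymm, hPidem]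
    rw [Matrix.dotProduct_mulVec, hP]
  have hexp : ∀ v : Fin n → ℝ, P *ᵥ v = ∑ l : Fin k, (g l ⬝ᵥ v) • g l := by
    intro v
    have hx : (WithLp.equiv 2 (Fin n → ℝ)).symm (P *ᵥ v) ∈ V :=
      ⟨(WithLp.equiv 2 (Fin n → ℝ)).symm v, rfl⟩
    have hsum := b.sum_repr ⟨_, hx⟩
    have h2 : ∀ l, b.repr ⟨_, hx⟩ l = g l ⬝ᵥ v := by
      intro l
      rw [b.repr_apply_apply, ← hfix l v, Submodule.coe_inner]
      simp [PiLp.inner_apply, dotProduct, g]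
      exact Finset.sum_congr rfl fun _ _ => mul_comm _ _
    calc P *ᵥ v = ((⟨_, hx⟩ : V) : EuclideanSpace ℝ (Fin n)) := rfl
      _ = ((∑ l, b.repr ⟨_, hx⟩ l • b l : V) : EuclideanSpace ℝ (Fin n)) := by rw [hsum]
      _ = ∑ l, b.repr ⟨_, hx⟩ l • (b l : EuclideanSpace ℝ (Fin n)) := by
          push_cast
          try rfl
      _ = ∑ l : Fin k, (g l ⬝ᵥ v) • g l := by
          simp only [h2]
          simp [g, WithLp.ofLp_sum]
  refine ⟨Matrix.of fun i l => g l i, ?_, ?_⟩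
  · ext i j
    simpa [Matrix.mul_apply, Matrix.one_apply, dotProduct] using hg_inner i j
  · ext i j
    have h := congrFun (hexp (Pi.single j 1)) i
    rw [Matrix.mulVec_single] at h
    simp only [MulOpposite.op_one, one_smul, Matrix.col_apply] at h
    rw [Matrix.mul_apply]
    rw [h]
    simp [dotProduct_single, mul_comm]

lemma frobSq_proj_le {n d k : ℕ} (P : Matrix (Fin n) (Fin n) ℝ) (hPsymm : Pᵀ = P)
    (hPidem : P * P = P) (hPrank : P.rank = k) (E : Matrix (Fin n) (Fin d) ℝ) :
    frobSq (P * E) ≤ k * specNorm E ^ 2 := by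
  obtain ⟨Q, hQ1, hQ2⟩ := exists_factor P hPsymm hPidem hPrank
  have hcol : ∀ i : Fin k, ∑ l, Q l i ^ 2 = 1 := by
    intro i
    have h := congr_arg (fun M => M i i) hQ1
    simpa [Matrix.mul_apply, Matrix.one_apply, sq] using h
  have step1 : frobSq (P * E) = frobSq (Qᵀ * E) := by
    unfold frobSq
    rw [Matrix.transpose_mul, hPsymm, Matrix.transpose_mul, Matrix.transpose_transpose]
    rw [← hQ2]
    simp only [Matrix.mul_assoc]
    rw [Matrix.trace_mul_comm]
    simp only [Matrix.mul_assoc]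
    rw [hQ1]
    simp
  rw [step1, frobSq_eq_sum]
  calc ∑ i : Fin k, ∑ j, (Qᵀ * E) i j ^ 2
      = ∑ i : Fin k, ∑ j, (Eᵀ *ᵥ (fun l => Q l i)) j ^ 2 := by
        apply Finset.sum_congr rfl
        intro i _
        apply Finset.sum_congr rfl
        intro j _
        congr 1
        simp [Matrix.mul_apply, Matrix.mulVec, dotProduct, mul_comm]
    _ ≤ ∑ i : Fin k, specNorm Eᵀ ^ 2 * ∑ l, Q l i ^ 2 :=
        Finset.sum_le_sum fun i _ => mulVec_sq_le Eᵀ _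
    _ = ∑ _i : Fin k, specNorm E ^ 2 := by
        simp [hcol, specNorm_transpose]
    _ = k * specNorm E ^ 2 := by
        simp [Finset.sum_const]
/-- A spectral-norm-accurate low-rank approximation gives a one-sided
projection-cost preserving sketch: if `Z` has orthonormal columns and
`‖A − AZZᵀ‖₂² ≤ (ε/k)‖A − A_k‖_F²`, then for every rank-`k` orthogonal
projection `P`, with `c = ‖A − AZZᵀ‖_F²`,
`‖A − PA‖_F² ≤ ‖AZZᵀ − P·AZZᵀ‖_F² + c ≤ (1+ε)‖A − PA‖_F²`. -/
theorem spectral_approx_sketch {n d m : ℕ} (k : ℕ) (hk : 0 < k) (ε : ℝ)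
    (hε : 0 ≤ ε) (A : Matrix (Fin n) (Fin d) ℝ)
    (Z : Matrix (Fin d) (Fin m) ℝ) (hZ : Zᵀ * Z = 1)
    (hspec : specNorm (A - A * Z * Zᵀ) ^ 2 ≤ (ε / k) * optErr A k)
    (P : Matrix (Fin n) (Fin n) ℝ)
    (hPsymm : Pᵀ = P) (hPidem : P * P = P) (hPrank : P.rank = k) :
    frobSq (A - P * A) ≤
        frobSq (A * Z * Zᵀ - P * (A * Z * Zᵀ)) + frobSq (A - A * Z * Zᵀ) ∧
      frobSq (A * Z * Zᵀ - P * (A * Z * Zᵀ)) + frobSq (A - A * Z * Zᵀ) ≤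
        (1 + ε) * frobSq (A - P * A) := by
  set B : Matrix (Fin n) (Fin d) ℝ := A * Z * Zᵀ with hB
  set E : Matrix (Fin n) (Fin d) ℝ := A - A * Z * Zᵀ with hE
  have hBE : B * Eᵀ = 0 := by
    rw [hB, hE, Matrix.transpose_sub, Matrix.mul_sub]
    rw [Matrix.transpose_mul, Matrix.transpose_mul, Matrix.transpose_transpose]
    simp only [Matrix.mul_assoc]
    rw [← Matrix.mul_assoc Zᵀ Z, hZ, Matrix.one_mul, sub_self]
  have hsum : B + E = A := by rw [hB, hE]; abel
  -- orthogonal decomposition of the error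
  have hXY : (B - P * B) * (E - P * E)ᵀ = 0 := by
    rw [Matrix.transpose_sub, Matrix.transpose_mul, hPsymm]
    rw [Matrix.sub_mul, Matrix.mul_sub, Matrix.mul_sub]
    simp only [Matrix.mul_assoc]
    rw [← Matrix.mul_assoc B Eᵀ P, hBE]
    simp [hBE, Matrix.mul_assoc]
  have hsplit : frobSq (A - P * A) = frobSq (B - P * B) + frobSq (E - P * E) := by
    have : A - P * A = (B - P * B) + (E - P * E) := by
      rw [← hsum, Matrix.mul_add]; abel
    rw [this, frobSq_add_of_orth _ _ hXY]
  have hE_split : frobSq (E - P * E) = frobSq E - frobSq (P * E) :=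
    frobSq_sub_proj P hPsymm hPidem E
  have hPE_nonneg : 0 ≤ frobSq (P * E) := frobSq_nonneg _
  have hPE_le : frobSq (P * E) ≤ ε * frobSq (A - P * A) := by
    have h1 : frobSq (P * E) ≤ k * specNorm E ^ 2 :=
      frobSq_proj_le P hPsymm hPidem hPrank E
    have h2 : (k : ℝ) * specNorm E ^ 2 ≤ (k : ℝ) * ((ε / k) * optErr A k) := by
      apply mul_le_mul_of_nonneg_left _ (by positivity)
      exact hspec
    have hkne : (k : ℝ) ≠ 0 := by positivity
    have h3 : (k : ℝ) * ((ε / k) * optErr A k) = ε * optErr A k := by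
      field_simp
    have h4 : optErr A k ≤ frobSq (A - P * A) := by
      apply csInf_le
      · refine ⟨0, ?_⟩
        rintro x ⟨C, _, rfl⟩
        exact frobSq_nonneg _
      · exact ⟨P * A, le_trans (Matrix.rank_mul_le_left P A) (le_of_eq hPrank), rfl⟩
    calc frobSq (P * E) ≤ ε * optErr A k := by linarith
      _ ≤ ε * frobSq (A - P * A) := mul_le_mul_of_nonneg_left h4 hε
  constructor
  · linarith
  · linarith
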